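/- arXiv:1107.0833 — 6 statements merged into one kernel-verified Lean document; each statement's English description precedes it below -/
import Mathlib

section
/- Let X be a topological space with lattice of closed sets C_X ordered by inclusion. Then C_X admits an orthocomplementation (an order-reversing involution ' with a ∧ a' = ⊥ and a ∨ a' = ⊤) if and only if C_X is a Boolean algebra. -/
open TopologicalSpace

theorem stmt_0 (X : Type*) [TopologicalSpace X] :
    (∃ f : Closeds X → Closeds X,
      (∀ a, f (f a) = a) ∧ (∀ a b, a ≤ b → f b ≤ f a) ∧
      (∀ a, a ⊓ f a = ⊥) ∧ (∀ a, a ⊔ f a = ⊤)) ↔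
    ((∀ a b c : Closeds X, a ⊓ (b ⊔ c) = (a ⊓ b) ⊔ (a ⊓ c)) ∧
      ∀ a : Closeds X, ∃ b, a ⊓ b = ⊥ ∧ a ⊔ b = ⊤) := by
  have hdist : ∀ a b c : Closeds X, a ⊓ (b ⊔ c) = (a ⊓ b) ⊔ (a ⊓ c) := fun a b c =>
    inf_sup_left a b c
  constructor
  · rintro ⟨f, _, _, hbot, htop⟩
    exact ⟨hdist, fun a => ⟨f a, hbot a, htop a⟩⟩
  · rintro ⟨-, hc⟩
    choose f hbot htop using hc
    have hic : ∀ a, IsCompl a (f a) := fun a =>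
      isCompl_iff.mpr ⟨disjoint_iff.mpr (hbot a), codisjoint_iff.mpr (htop a)⟩
    refine ⟨f, fun a => (hic (f a)).right_unique (hic a).symm,
      fun a b hab => ?_, hbot, htop⟩
    · have : f b ⊓ a ≤ ⊥ := le_trans (inf_le_inf_left _ hab) (by rw [inf_comm]; exact (hbot b).le)
      calc f b = f b ⊓ (a ⊔ f a) := by rw [htop a, inf_top_eq]
        _ = (f b ⊓ a) ⊔ (f b ⊓ f a) := hdist _ _ _
        _ ≤ ⊥ ⊔ f a := sup_le_sup this inf_le_right
        _ = f a := bot_sup_eq _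
end

section
/- Let (Σ, L, ξ) be a State Property System and let T ⊆ L be the set of topological properties, i.e. those a with κ(a ∨ b) ⊆ κ(a) ∪ κ(b) for all b ∈ L. Then 0 ∈ T, 1 ∈ T, and T is closed under arbitrary nonempty meets taken in L. -/
theorem stmt_9 {S L : Type*} [Preorder S] [CompleteLattice L] (ξ : S → Set L)
    (h1 : ∀ p, (⊤ : L) ∈ ξ p ∧ (⊥ : L) ∉ ξ p)
    (h2 : ∀ p q, p ≤ q ↔ ξ q ⊆ ξ p)
    (h3 : ∀ a b : L, a ≤ b ↔ ∀ r, a ∈ ξ r → b ∈ ξ r)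
    (h4 : ∀ A : Set L, A.Nonempty → ∀ p, sInf A ∈ ξ p ↔ ∀ a ∈ A, a ∈ ξ p) :
    let T : Set L := {a | ∀ b : L, {p | a ⊔ b ∈ ξ p} ⊆ {p | a ∈ ξ p} ∪ {p | b ∈ ξ p}}
    (⊥ : L) ∈ T ∧ (⊤ : L) ∈ T ∧
    ∀ A : Set L, A.Nonempty → A ⊆ T → sInf A ∈ T := by
  intro T
  refine ⟨?_, ?_, ?_⟩
  · intro b p hp
    right
    simpa using hp
  · intro b p hp
    left
    exact (h1 p).1
  · intro A hA hAT b p hp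
    by_cases hb : b ∈ ξ p
    · right; exact hb
    · left
      show sInf A ∈ ξ p
      rw [h4 A hA p]
      intro a ha
      have hle : sInf A ⊔ b ≤ a ⊔ b := sup_le_sup_right (sInf_le ha) b
      have := (h3 _ _).mp hle p hp
      rcases hAT ha b this with h | h
      · exact h
      · exact absurd h hb
end

section
/- Let (Σ, L, ξ) be a State Property System. If a and b are topological properties, then a ∨ b (join in L) is a topological property and κ(a ∨ b) = κ(a) ∪ κ(b). Consequently, by induction, any finite join of topological properties is topological and its Cartan image is the union of the Cartan images. -/
theorem stmt_10 {S L : Type*} [Preorder S] [CompleteLattice L] (ξ : S → Set L)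
    (h1 : ∀ p, (⊤ : L) ∈ ξ p ∧ (⊥ : L) ∉ ξ p)
    (h2 : ∀ p q, p ≤ q ↔ ξ q ⊆ ξ p)
    (h3 : ∀ a b : L, a ≤ b ↔ ∀ r, a ∈ ξ r → b ∈ ξ r)
    (h4 : ∀ A : Set L, A.Nonempty → ∀ p, sInf A ∈ ξ p ↔ ∀ a ∈ A, a ∈ ξ p) :
    let T : Set L := {a | ∀ b : L, {p | a ⊔ b ∈ ξ p} ⊆ {p | a ∈ ξ p} ∪ {p | b ∈ ξ p}}
    (∀ a b : L, a ∈ T → b ∈ T →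
      a ⊔ b ∈ T ∧ {p | a ⊔ b ∈ ξ p} = {p | a ∈ ξ p} ∪ {p | b ∈ ξ p}) ∧
    (∀ (ι : Type) (s : Finset ι) (f : ι → L), s.Nonempty → (∀ i ∈ s, f i ∈ T) →
      s.sup f ∈ T ∧ {p | s.sup f ∈ ξ p} = ⋃ i ∈ s, {p | f i ∈ ξ p}) := by
  intro T
  have mono : ∀ a b : L, a ≤ b → ∀ p, a ∈ ξ p → b ∈ ξ p := fun a b h => (h3 a b).mp h
  have key : ∀ a b : L, a ∈ T → b ∈ T →
      a ⊔ b ∈ T ∧ {p | a ⊔ b ∈ ξ p} = {p | a ∈ ξ p} ∪ {p | b ∈ ξ p} := by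
    intro a b ha hb
    constructor
    · intro c p hp
      have hp' : a ⊔ (b ⊔ c) ∈ ξ p := by
        have h : a ⊔ b ⊔ c = a ⊔ (b ⊔ c) := sup_assoc a b c
        rwa [h] at hp
      rcases ha (b ⊔ c) hp' with h | h
      · exact Or.inl (mono a (a ⊔ b) le_sup_left p h)
      · rcases hb c h with h' | h'
        · exact Or.inl (mono b (a ⊔ b) le_sup_right p h')
        · exact Or.inr h'
    · apply Set.Subset.antisymm
      · exact ha b
      · rintro p (h | h)
        · exact mono a (a ⊔ b) le_sup_left p h
        · exact mono b (a ⊔ b) le_sup_right p h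
  refine ⟨key, ?_⟩
  intro ι s f hs hf
  induction hs using Finset.Nonempty.cons_induction with
  | singleton i =>
      simp only [Finset.sup_singleton]
      refine ⟨hf i (Finset.mem_singleton_self i), ?_⟩
      ext p; simp
  | cons i s hi hs ih =>
      have hfi : f i ∈ T := hf i (Finset.mem_cons_self i s)
      have hfs : ∀ j ∈ s, f j ∈ T := fun j hj => hf j (Finset.mem_cons_of_mem hj)
      obtain ⟨ih1, ih2⟩ := ih hfs
      rw [Finset.sup_cons]
      obtain ⟨k1, k2⟩ := key (f i) (s.sup f) hfi ih1
      refine ⟨k1, ?_⟩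
      rw [k2, ih2]
      ext p
      simp only [Set.mem_union, Set.mem_iUnion, Finset.mem_cons, Set.mem_setOf_eq]
      constructor
      · rintro (h | ⟨j, hj, h⟩)
        · exact ⟨i, ⟨Or.inl rfl, h⟩⟩
        · exact ⟨j, ⟨Or.inr hj, h⟩⟩
      · rintro ⟨j, ⟨(rfl | hj), h⟩⟩
        · exact Or.inl h
        · exact Or.inr ⟨j, hj, h⟩
end

section
/- Let (Σ, L, ξ) be a State Property System. For p ∈ Σ define the topological state τ(p) = ⋀{a ∈ T : a ∈ ξ(p)}, where T is the set of topological properties. Then for every p ∈ Σ, p ∈ κ(τ(p)), and for every q ∈ κ(τ(p)) one has τ(q) ≤ τ(p); consequently τ(p) = ⋁_{q ∈ κ(τ(p))} τ(q). -/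
theorem stmt_11 {S L : Type*} [Preorder S] [CompleteLattice L] (ξ : S → Set L)
    (h1 : ∀ p, (⊤ : L) ∈ ξ p ∧ (⊥ : L) ∉ ξ p)
    (h2 : ∀ p q, p ≤ q ↔ ξ q ⊆ ξ p)
    (h3 : ∀ a b : L, a ≤ b ↔ ∀ r, a ∈ ξ r → b ∈ ξ r)
    (h4 : ∀ A : Set L, A.Nonempty → ∀ p, sInf A ∈ ξ p ↔ ∀ a ∈ A, a ∈ ξ p) :
    let T : Set L := {a | ∀ b : L, {p | a ⊔ b ∈ ξ p} ⊆ {p | a ∈ ξ p} ∪ {p | b ∈ ξ p}}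
    let τ : S → L := fun p => sInf (ξ p ∩ T)
    ∀ p : S,
      τ p ∈ ξ p ∧
      (∀ q, τ p ∈ ξ q → τ q ≤ τ p) ∧
      τ p = ⨆ q ∈ {q | τ p ∈ ξ q}, τ q := by
  intro T τ p
  have hTop : (⊤ : L) ∈ T := by
    intro b r hr
    left
    exact (h1 r).1
  have hne : ∀ r : S, (ξ r ∩ T).Nonempty := fun r => ⟨⊤, (h1 r).1, hTop⟩
  have hmem : ∀ r : S, τ r ∈ ξ r := by
    intro r
    exact (h4 _ (hne r) r).mpr (fun a ha => ha.1)
  have hle : ∀ q, τ p ∈ ξ q → τ q ≤ τ p := by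
    intro q hq
    have : ∀ a ∈ ξ p ∩ T, a ∈ ξ q := (h4 _ (hne p) q).mp hq
    exact sInf_le_sInf (fun a ha => ⟨this a ha, ha.2⟩)
  refine ⟨hmem p, hle, le_antisymm ?_ ?_⟩
  · exact le_iSup₂_of_le p (hmem p) le_rfl
  · exact iSup₂_le (fun q hq => hle q hq)
end

section
/- Let H be a Hilbert space of dimension at least 2, and consider the complete lattice L(H) of closed linear subspaces of H. If a ∈ L(H) satisfies that for all c ∈ L(H), every unit vector (ray) contained in a ∨ c (the closed linear span of a ∪ c) lies in a or lies in c, then a = 0 or a = H. -/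
theorem stmt_12 (H : Type*) [NormedAddCommGroup H] [InnerProductSpace ℂ H]
    [CompleteSpace H] (hdim : 2 ≤ Module.rank ℂ H)
    (a : Submodule ℂ H) (ha : IsClosed (a : Set H))
    (h : ∀ c : Submodule ℂ H, IsClosed (c : Set H) →
      ∀ x : H, ‖x‖ = 1 → x ∈ (a ⊔ c).topologicalClosure → x ∈ a ∨ x ∈ c) :
    a = ⊥ ∨ a = ⊤ := by
  by_contra hcon
  push_neg at hcon
  obtain ⟨hbot, htop⟩ := hcon
  -- get nonzero x ∈ a
  obtain ⟨x, hxa, hx0⟩ : ∃ x, x ∈ a ∧ x ≠ 0 := by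
    by_contra hx
    push_neg at hx
    exact hbot (le_antisymm (fun v hv => (Submodule.mem_bot ℂ).2 (hx v hv)) bot_le)
  -- get y ∉ a
  obtain ⟨y, hya⟩ : ∃ y, y ∉ a := by
    by_contra hy
    push_neg at hy
    exact htop (le_antisymm le_top fun v _ => hy v)
  set c : Submodule ℂ H := Submodule.span ℂ {y} with hc
  haveI : FiniteDimensional ℂ c := by
    rw [hc]; infer_instance
  have hcclosed : IsClosed (c : Set H) := Submodule.closed_of_finiteDimensional c
  have hxy0 : x + y ≠ 0 := by
    intro hxy
    apply hya
    have : y = (-1 : ℂ) • x := by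
      have := eq_neg_of_add_eq_zero_right hxy
      simp [this]
    rw [this]
    exact a.smul_mem _ hxa
  have hnorm : ‖x + y‖ ≠ 0 := norm_ne_zero_iff.2 hxy0
  set z : H := ((‖x + y‖ : ℂ))⁻¹ • (x + y) with hz
  have hznorm : ‖z‖ = 1 := by
    rw [hz, norm_smul]
    simp [hnorm]
  have hzmem : z ∈ a ⊔ c := by
    apply Submodule.smul_mem
    exact Submodule.add_mem _ (Submodule.mem_sup_left hxa)
      (Submodule.mem_sup_right (Submodule.mem_span_singleton_self y))
  have hzcl : z ∈ (a ⊔ c).topologicalClosure :=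
    Submodule.le_topologicalClosure _ hzmem
  have hxymem : ∀ s : Submodule ℂ H, z ∈ s → x + y ∈ s := by
    intro s hs
    have := s.smul_mem ((‖x + y‖ : ℂ)) hs
    rwa [hz, smul_smul, mul_inv_cancel₀ (by exact_mod_cast hnorm), one_smul] at this
  rcases h c hcclosed z hznorm hzcl with hza | hzc
  · -- then y ∈ a, contradiction
    have hxy : x + y ∈ a := hxymem a hza
    exact hya (by simpa using a.sub_mem hxy hxa)
  · -- then x + y ∈ span{y}
    have hxy : x + y ∈ c := hxymem c hzc
    rw [hc, Submodule.mem_span_singleton] at hxy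
    obtain ⟨l, hl⟩ := hxy
    have hx : x = (l - 1) • y := by
      rw [sub_smul, one_smul, hl]; abel
    have hl1 : l - 1 ≠ 0 := by
      intro h0
      rw [h0, zero_smul] at hx
      exact hx0 hx
    apply hya
    have : y = (l - 1)⁻¹ • x := by
      rw [hx, smul_smul, inv_mul_cancel₀ hl1, one_smul]
    rw [this]
    exact a.smul_mem _ hxa
end

section
/- On the sphere S² ⊆ ℝ³, for u ∈ S² let a_u = B(u, π/2) be the closed half-sphere {x ∈ S² : ⟨x,u⟩ ≥ 0}, and let L be the collection of subsets of S² obtained by closing {B(u,π/2) : u ∈ S²} ∪ {∅, S²} under arbitrary intersections, ordered by inclusion (a complete lattice with meet = intersection and join a∨b = smallest element of L containing a ∪ b). Then for any u ∈ S², the join of a_u and the singleton property b_u = {-u} (which lies in L as an intersection of half-spheres) equals S², while a_u ∪ {-u} ≠ S². Hence a_u is not a topological property. -/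
open RealInnerProductSpace

private lemma span_of_perp (u x : EuclideanSpace ℝ (Fin 3))
    (h : ∀ w : EuclideanSpace ℝ (Fin 3), ‖w‖ = 1 → ⟪w, u⟫ = 0 → ⟪x, w⟫ = 0) :
    ∃ c : ℝ, x = c • u := by
  have hx : x ∈ (ℝ ∙ u)ᗮᗮ := by
    rw [Submodule.mem_orthogonal]
    intro w hw
    have hwu : ⟪w, u⟫ = 0 := by
      have := (Submodule.mem_orthogonal _ _).1 hw u (Submodule.mem_span_singleton_self u)
      rwa [real_inner_comm] at this
    rcases eq_or_ne w 0 with h0 | h0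
    · simp [h0]
    · have hn : ‖w‖ ≠ 0 := norm_ne_zero_iff.2 h0
      have h1 : ‖(‖w‖⁻¹ • w)‖ = 1 := by
        rw [norm_smul]; simp [abs_of_nonneg (inv_nonneg.2 (norm_nonneg w)), inv_mul_cancel₀ hn]
      have h2 : ⟪(‖w‖⁻¹ • w), u⟫ = 0 := by
        rw [real_inner_smul_left, hwu]; ring
      have := h _ h1 h2
      rw [real_inner_smul_right] at this
      have : ⟪x, w⟫ = 0 := by
        rcases mul_eq_zero.1 this with h' | h'
        · exact absurd h' (inv_ne_zero hn)
        · exact h'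
      rwa [real_inner_comm] at this
  rw [Submodule.orthogonal_orthogonal] at hx
  rcases Submodule.mem_span_singleton.1 hx with ⟨c, hc⟩
  exact ⟨c, hc.symm⟩

private lemma exists_unit_perp (u : EuclideanSpace ℝ (Fin 3)) :
    ∃ w : EuclideanSpace ℝ (Fin 3), ‖w‖ = 1 ∧ ⟪w, u⟫ = 0 := by
  have hdim : Module.finrank ℝ (EuclideanSpace ℝ (Fin 3)) = 3 := by simp
  have hne : ((ℝ ∙ u)ᗮ : Submodule ℝ (EuclideanSpace ℝ (Fin 3))) ≠ ⊥ := by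
    intro hbot
    have := Submodule.finrank_add_finrank_orthogonal (K := (ℝ ∙ u : Submodule ℝ (EuclideanSpace ℝ (Fin 3))))
    rw [hbot, hdim] at this
    simp at this
    have hle : Module.finrank ℝ (ℝ ∙ u : Submodule ℝ (EuclideanSpace ℝ (Fin 3))) ≤ 1 := by
      rcases eq_or_ne u 0 with h | h
      · rw [h, Submodule.span_zero_singleton]; simp
      · rw [finrank_span_singleton h]
    omega
  rcases Submodule.exists_mem_ne_zero_of_ne_bot hne with ⟨w, hw, hw0⟩
  have hn : ‖w‖ ≠ 0 := norm_ne_zero_iff.2 hw0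
  refine ⟨‖w‖⁻¹ • w, ?_, ?_⟩
  · rw [norm_smul]; simp [abs_of_nonneg (inv_nonneg.2 (norm_nonneg w)), inv_mul_cancel₀ hn]
  · have hwu : ⟪w, u⟫ = 0 := by
      have := (Submodule.mem_orthogonal _ _).1 hw u (Submodule.mem_span_singleton_self u)
      rwa [real_inner_comm] at this
    rw [real_inner_smul_left, hwu]; ring

theorem stmt_15
    (Sph : Set (EuclideanSpace ℝ (Fin 3)))
    (hSph : Sph = Metric.sphere (0 : EuclideanSpace ℝ (Fin 3)) 1)
    (Lc : Set (Set (EuclideanSpace ℝ (Fin 3))))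
    (hLc : Lc = {c | c = ∅ ∨ c = Sph ∨
      ∃ U : Set (EuclideanSpace ℝ (Fin 3)), U ⊆ Sph ∧ U.Nonempty ∧
        c = ⋂ v ∈ U, {x ∈ Sph | 0 ≤ ⟪x, v⟫}})
    (u : EuclideanSpace ℝ (Fin 3)) (hu : u ∈ Sph) :
    {x ∈ Sph | 0 ≤ ⟪x, u⟫} ∈ Lc ∧
    {-u} ∈ Lc ∧
    ⋂₀ {c ∈ Lc | {x ∈ Sph | 0 ≤ ⟪x, u⟫} ∪ {-u} ⊆ c} = Sph ∧
    {x ∈ Sph | 0 ≤ ⟪x, u⟫} ∪ {-u} ≠ Sph := by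
  have hun : ‖u‖ = 1 := by
    rw [hSph, mem_sphere_zero_iff_norm] at hu
    exact hu
  have hmemS : ∀ x : EuclideanSpace ℝ (Fin 3), x ∈ Sph ↔ ‖x‖ = 1 := by
    intro x; rw [hSph, mem_sphere_zero_iff_norm]
  have hnegu : -u ∈ Sph := by rw [hmemS]; simp [hun]
  have huu : ⟪u, u⟫ = (1:ℝ) := by
    rw [real_inner_self_eq_norm_sq, hun]; norm_num
  -- Part 1
  have part1 : {x ∈ Sph | 0 ≤ ⟪x, u⟫} ∈ Lc := by
    rw [hLc]
    refine Or.inr (Or.inr ⟨{u}, ?_, ⟨u, rfl⟩, ?_⟩)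
    · simp [hu]
    · simp
  -- Part 2
  have part2 : ({-u} : Set (EuclideanSpace ℝ (Fin 3))) ∈ Lc := by
    rw [hLc]
    refine Or.inr (Or.inr ⟨{v ∈ Sph | 0 ≤ ⟪-u, v⟫}, fun v hv => hv.1, ⟨-u, hnegu, by simp [huu]⟩, ?_⟩)
    ext x
    simp only [Set.mem_singleton_iff, Set.mem_iInter, Set.mem_setOf_eq]
    constructor
    · rintro rfl v ⟨hvS, hv⟩
      exact ⟨hnegu, hv⟩
    · intro hx
      have hxS : x ∈ Sph := (hx (-u) ⟨hnegu, by simp [huu]⟩).1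
      have hperp : ∀ w : EuclideanSpace ℝ (Fin 3), ‖w‖ = 1 → ⟪w, u⟫ = 0 → ⟪x, w⟫ = 0 := by
        intro w hw1 hw2
        have hwS : w ∈ Sph := (hmemS w).2 hw1
        have hmwS : -w ∈ Sph := by rw [hmemS]; simp [hw1]
        have h1 : 0 ≤ ⟪x, w⟫ := (hx w ⟨hwS, by rw [inner_neg_left, real_inner_comm, hw2]; simp⟩).2
        have h2 : 0 ≤ ⟪x, -w⟫ := (hx (-w) ⟨hmwS, by rw [inner_neg_left, inner_neg_right, real_inner_comm, hw2]; simp⟩).2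
        rw [inner_neg_right] at h2
        linarith
      rcases span_of_perp u x hperp with ⟨c, hc⟩
      have hcle : c ≤ 0 := by
        have := (hx (-u) ⟨hnegu, by simp [huu]⟩).2
        rw [hc, inner_neg_right, real_inner_smul_left, huu] at this
        linarith
      have hxn : ‖x‖ = 1 := (hmemS x).1 hxS
      have : |c| = 1 := by
        rw [hc, norm_smul, hun, mul_one, Real.norm_eq_abs] at hxn
        exact hxn
      have hc1 : c = -1 := by
        rcases abs_eq (by norm_num : (0:ℝ) ≤ 1) |>.1 this with h | h
        · linarith
        · exact h
      rw [hc, hc1, neg_one_smul]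
  refine ⟨part1, part2, ?_, ?_⟩
  -- Part 3
  · apply Set.Subset.antisymm
    · intro x hx
      exact hx Sph ⟨by rw [hLc]; exact Or.inr (Or.inl rfl),
        by rintro y (⟨hy, _⟩ | rfl); exact hy; exact hnegu⟩
    · intro x hxS c hc
      rcases hc with ⟨hcL, hsub⟩
      rw [hLc] at hcL
      rcases hcL with rfl | rfl | ⟨U, hUS, ⟨v0, hv0⟩, rfl⟩
      · exact absurd (hsub (Or.inr rfl)) (Set.notMem_empty _)
      · exact hxS
      · exfalso
        have hkey : ∀ v ∈ U, False := by
          intro v hv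
          have hmu : 0 ≤ ⟪-u, v⟫ := by
            have := hsub (Or.inr rfl)
            simp only [Set.mem_iInter, Set.mem_setOf_eq] at this
            exact (this v hv).2
          have hpu : 0 ≤ ⟪u, v⟫ := by
            have := hsub (Or.inl ⟨hu, by rw [huu]; norm_num⟩)
            simp only [Set.mem_iInter, Set.mem_setOf_eq] at this
            exact (this v hv).2
          have huv0 : ⟪u, v⟫ = 0 := by
            rw [inner_neg_left] at hmu; linarith
          have hperp : ∀ w : EuclideanSpace ℝ (Fin 3), ‖w‖ = 1 → ⟪w, u⟫ = 0 → ⟪v, w⟫ = 0 := by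
            intro w hw1 hw2
            have hwS : w ∈ Sph := (hmemS w).2 hw1
            have hmwS : -w ∈ Sph := by rw [hmemS]; simp [hw1]
            have h1 : 0 ≤ ⟪w, v⟫ := by
              have := hsub (Or.inl ⟨hwS, le_of_eq hw2.symm⟩)
              simp only [Set.mem_iInter, Set.mem_setOf_eq] at this
              exact (this v hv).2
            have h2 : 0 ≤ ⟪-w, v⟫ := by
              have := hsub (Or.inl ⟨hmwS, by rw [inner_neg_left, hw2]; simp⟩)
              simp only [Set.mem_iInter, Set.mem_setOf_eq] at this
              exact (this v hv).2
            rw [inner_neg_left] at h2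
            rw [real_inner_comm]
            linarith
          rcases span_of_perp u v hperp with ⟨c, hc⟩
          have hc0 : c = 0 := by
            rw [hc, real_inner_smul_right, huu] at huv0
            linarith
          have : v = 0 := by rw [hc, hc0, zero_smul]
          have hvn : ‖v‖ = 1 := (hmemS v).1 (hUS hv)
          rw [this] at hvn
          simp at hvn
        exact hkey v0 hv0
  -- Part 4
  · intro heq
    rcases exists_unit_perp u with ⟨w, hw1, hw2⟩
    set y := (Real.sqrt 2)⁻¹ • (w - u) with hy
    have hs2 : Real.sqrt 2 > 0 := Real.sqrt_pos.2 (by norm_num)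
    have hwu : ⟪w, u⟫ = 0 := hw2
    have hnsub : ‖w - u‖ = Real.sqrt 2 := by
      have : ‖w - u‖^2 = 2 := by
        rw [norm_sub_sq_real, hw1, hun, hwu]; ring
      nlinarith [norm_nonneg (w - u), Real.sq_sqrt (by norm_num : (2:ℝ) ≥ 0), Real.sqrt_nonneg 2]
    have hyn : ‖y‖ = 1 := by
      rw [hy, norm_smul, hnsub, Real.norm_eq_abs, abs_of_nonneg (inv_nonneg.2 hs2.le),
        inv_mul_cancel₀ hs2.ne']
    have hyS : y ∈ Sph := (hmemS y).2 hyn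
    have hyu : ⟪y, u⟫ = -(Real.sqrt 2)⁻¹ := by
      rw [hy, real_inner_smul_left, inner_sub_left, hwu, huu]; ring
    have := heq ▸ hyS
    rcases (heq.symm ▸ hyS : y ∈ _ ∪ _) with ⟨_, hge⟩ | hsing
    · rw [hyu] at hge
      have : (0:ℝ) < (Real.sqrt 2)⁻¹ := inv_pos.2 hs2
      linarith
    · have : y = -u := hsing
      have h1 : ⟪y, u⟫ = -1 := by rw [this, inner_neg_left, huu]
      rw [hyu] at h1
      have hs2ne : Real.sqrt 2 ≠ 1 := by
        intro h
        have := Real.sq_sqrt (by norm_num : (0:ℝ) ≤ 2)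
        rw [h] at this; norm_num at this
      have : (Real.sqrt 2)⁻¹ = 1 := by linarith
      rw [inv_eq_one] at this
      exact hs2ne this
end
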